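/- For every integer k ≥ 0, the number of lattice points of ℤ^{n+2} lying in the dilate k·Δ', where Δ' is the convex hull of the origin and V_1, …, V_{n+1}, equals Σ_{j=0}^{min(k,n)} C(k−j+n+1, n+1), where C(m, r) denotes the binomial coefficient. -/

import Mathlib

open Finset
open scoped Pointwise

/-- The points `V_1, …, V_{n+1}` in `ℝ^{n+2}` (0-indexed: `Vpt' n j` is `V_{j+1}`):
`V_i = e_i + e_{n+1} + e_{n+2}` for `1 ≤ i ≤ n`,
`V_{n+1} = −(e_1+⋯+e_n) + e_{n+1} + e_{n+2}`. -/
def Vpt' (n : ℕ) (j : Fin (n + 1)) (i : Fin (n + 2)) : ℝ :=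
  if (j : ℕ) < n then
    (if (i : ℕ) = (j : ℕ) then 1 else 0) + (if (i : ℕ) = n then 1 else 0) +
      (if (i : ℕ) = n + 1 then 1 else 0)
  else (if (i : ℕ) < n then -1 else 1)

/-!
Writing a point of `k • Δ'` as `∑ l_j V_j` with `l ≥ 0`, `∑ l_j ≤ k`, its coordinates are
`l_i - l_{n+1}` (`i ≤ n`) followed twice by `∑ l_j`. Hence the lattice points are exactly the
images of the `f ∈ ℕ^{n+2}` with `∑ f ≤ k` under `f ↦ (f_i - f_{n+1})_{i ≤ n}, ∑ f, ∑ f` (take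
`l_j = f_j + f_{n+2} / (n + 1)`, and conversely round `l_{n+1}` down). Two such `f` have the same
image iff they differ by a multiple of `(1, …, 1, -(n + 1))`, so every lattice point has exactly one
preimage with a vanishing coordinate among the first `n + 1`. By stars and bars there are
`C(k+n+2, n+2) - C(k+1, n+2)` of these, and two hockey-stick sums turn this into the stated formula.
-/

section
variable {𝕜 E ι : Type*} [Field 𝕜] [LinearOrder 𝕜] [IsStrictOrderedRing 𝕜]
  [AddCommGroup E] [Module 𝕜 E] [Fintype ι]

theorem convexHull_insert_zero_range (v : ι → E) :
    convexHull 𝕜 (insert 0 (Set.range v)) =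
      {x | ∃ l : ι → 𝕜, (∀ j, 0 ≤ l j) ∧ ∑ j, l j ≤ 1 ∧ ∑ j, l j • v j = x} := by
  classical
  apply Set.Subset.antisymm
  · refine convexHull_min ?_ ?_
    · rintro _ (rfl | ⟨j, rfl⟩)
      · exact ⟨0, fun _ => le_rfl, by simp, by simp⟩
      · refine ⟨Pi.single j 1, fun i => ?_, by simp, by simp [Pi.single_apply]⟩
        by_cases h : i = j <;> simp [h]
    · rintro _ ⟨l, hl0, hl1, rfl⟩ _ ⟨m, hm0, hm1, rfl⟩ a b ha hb hab
      refine ⟨a • l + b • m, fun j => ?_, ?_, ?_⟩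
      · exact add_nonneg (mul_nonneg ha (hl0 j)) (mul_nonneg hb (hm0 j))
      · simp only [Pi.add_apply, Pi.smul_apply, smul_eq_mul, sum_add_distrib, ← mul_sum]
        nlinarith
      · simp only [Pi.add_apply, Pi.smul_apply, add_smul, smul_assoc, sum_add_distrib, smul_sum]
  · rintro _ ⟨l, hl0, hl1, rfl⟩
    have hw : ∀ o : Option ι, 0 ≤ o.elim (1 - ∑ j, l j) l := by
      rintro (_ | j)
      · simpa using hl1
      · exact hl0 j
    have := (convex_convexHull 𝕜 (insert 0 (Set.range v))).sum_mem (t := univ)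
      (w := fun o : Option ι => o.elim (1 - ∑ j, l j) l) (z := fun o => o.elim 0 v)
      (fun o _ => hw o) (by simp [Fintype.sum_option])
      (by rintro (_ | j) _ <;> apply subset_convexHull <;> simp)
    simpa [Fintype.sum_option] using this

theorem mem_smul_convexHull_insert_zero_range_iff (v : ι → E) {k : 𝕜} (hk : 0 ≤ k) (x : E) :
    x ∈ k • convexHull 𝕜 (insert 0 (Set.range v)) ↔
      ∃ l : ι → 𝕜, (∀ j, 0 ≤ l j) ∧ ∑ j, l j ≤ k ∧ ∑ j, l j • v j = x := by
  rw [convexHull_insert_zero_range, Set.mem_smul_set]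
  constructor
  · rintro ⟨_, ⟨l, hl0, hl1, rfl⟩, rfl⟩
    refine ⟨k • l, fun j => mul_nonneg hk (hl0 j), ?_, ?_⟩
    · simpa [← mul_sum] using mul_le_of_le_one_right hk hl1
    · simp [smul_sum, mul_smul]
  · rintro ⟨l, hl0, hlk, rfl⟩
    rcases hk.eq_or_lt with rfl | hk
    · have hl : l = 0 := by
        ext j
        exact ((single_le_sum (fun i _ => hl0 i) (mem_univ j)).trans hlk).antisymm (hl0 j)
      exact ⟨0, ⟨0, fun _ => le_rfl, by simp, by simp⟩, by simp [hl]⟩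
    · refine ⟨∑ j, (k⁻¹ * l j) • v j, ⟨fun j => k⁻¹ * l j, fun j => ?_, ?_, rfl⟩, ?_⟩
      · exact mul_nonneg (inv_nonneg.2 hk.le) (hl0 j)
      · rw [← mul_sum]; exact (inv_mul_le_one₀ hk).2 hlk
      · simp [smul_sum, smul_smul, hk.ne']
end

theorem Nat.sum_range_min_choose_add_choose (n k : ℕ) :
    ∑ j ∈ range (min k n + 1), (k - j + n + 1).choose (n + 1) + (k + 1).choose (n + 2) =
      (k + n + 2).choose (n + 2) := by
  have hockey (m : ℕ) : ∑ j ∈ range (m + 1), (m - j + n + 1).choose (n + 1) =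
      (m + n + 2).choose (n + 2) := by
    rw [← sum_range_reflect, show m + n + 2 = m + (n + 1) + 1 by ring,
      ← Nat.sum_range_add_choose m (n + 1)]
    refine sum_congr rfl fun j hj => ?_
    rw [mem_range] at hj
    congr 1
    omega
  rcases le_or_gt k n with hkn | hnk
  · rw [min_eq_left hkn, Nat.choose_eq_zero_of_lt (by omega), add_zero, hockey]
  · obtain ⟨m, rfl⟩ : ∃ m, k = n + 1 + m := ⟨k - (n + 1), by omega⟩
    have htail : ∑ x ∈ range (m + 1), (n + 1 + m - (n + 1 + x) + n + 1).choose (n + 1) =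
        (n + 1 + m + 1).choose (n + 2) := by
      rw [show n + 1 + m + 1 = m + n + 2 by ring, ← hockey m]
      refine sum_congr rfl fun x _ => ?_
      congr 1
      omega
    rw [min_eq_right (by omega), ← htail, ← sum_range_add, ← hockey (n + 1 + m)]
    rfl

def sumLeEquivPiAntidiag (d k : ℕ) :
    {f : Fin d → ℕ // ∑ i, f i ≤ k} ≃ (piAntidiag (univ : Finset (Fin (d + 1))) k) where
  toFun f := ⟨Fin.cons (k - ∑ i, f.1 i) f.1, by simp [Fin.sum_cons, f.2]⟩
  invFun g := ⟨Fin.tail g.1, by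
    have := (mem_piAntidiag.1 g.2).1
    rw [Fin.sum_univ_succ] at this
    simp [Fin.tail]; omega⟩
  left_inv f := by simp
  right_inv g := by
    refine Subtype.ext ?_
    have := (mem_piAntidiag.1 g.2).1
    rw [Fin.sum_univ_succ] at this
    ext i
    refine Fin.cases ?_ (fun i => rfl) i
    simp only [Fin.cons_zero, Fin.tail]
    omega

theorem card_piAntidiag_univ {ι : Type*} [Fintype ι] [DecidableEq ι] (k : ℕ) :
    #(piAntidiag (univ : Finset ι) k) = (Fintype.card ι + k - 1).choose k := by
  rw [← map_sym_eq_piAntidiag, card_map, sym_univ, card_univ, Sym.card_sym_eq_choose]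

theorem ncard_setOf_sum_le (d k : ℕ) : {f : Fin d → ℕ | ∑ i, f i ≤ k}.ncard = (k + d).choose d := by
  rw [← Nat.card_coe_set_eq, Set.coe_ofPred, Nat.card_congr (sumLeEquivPiAntidiag d k),
    Nat.card_eq_fintype_card, Fintype.card_coe, card_piAntidiag_univ, Fintype.card_fin,
    show d + 1 + k - 1 = k + d by omega, Nat.choose_symm_add]

theorem finite_setOf_sum_le (d k : ℕ) : {f : Fin d → ℕ | ∑ i, f i ≤ k}.Finite :=
  Set.finite_coe_iff.1 (Finite.of_equiv _ (sumLeEquivPiAntidiag d k).symm)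

theorem ncard_setOf_sum_le_of_castSucc_ne_zero (d k : ℕ) :
    {f : Fin (d + 1) → ℕ | ∑ i, f i ≤ k ∧ ∀ i : Fin d, f i.castSucc ≠ 0}.ncard =
      (k + 1).choose (d + 1) := by
  set e : Fin (d + 1) → ℕ := Fin.snoc (fun _ => 1) 0
  have he : ∑ i, e i = d := by simp [e, Fin.sum_univ_castSucc]
  have hset : {f : Fin (d + 1) → ℕ | ∑ i, f i ≤ k ∧ ∀ i : Fin d, f i.castSucc ≠ 0} =
      (· + e) '' {g | ∑ i, g i + d ≤ k} := by
    ext f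
    constructor
    · rintro ⟨hk, hf⟩
      have hef : e ≤ f := by
        rw [Pi.le_def, Fin.forall_fin_succ']
        exact ⟨fun i => by simpa [e, Nat.one_le_iff_ne_zero] using hf i, by simp [e]⟩
      refine ⟨f - e, ?_, tsub_add_cancel_of_le hef⟩
      have : ∑ i, (f - e) i + ∑ i, e i = ∑ i, f i := by
        rw [← sum_add_distrib]
        exact sum_congr rfl fun i _ => tsub_add_cancel_of_le (hef i)
      change _ ≤ k
      omega
    · rintro ⟨g, hg, rfl⟩
      exact ⟨by simpa [sum_add_distrib, he] using hg, fun i => by simp [e]⟩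
  rw [hset, Set.ncard_image_of_injective _ (add_left_injective e)]
  rcases le_or_gt d k with hk | hk
  · rw [show {g : Fin (d + 1) → ℕ | ∑ i, g i + d ≤ k} = {g | ∑ i, g i ≤ k - d} by
      ext; simp only [Set.mem_ofPred_eq]; omega, ncard_setOf_sum_le]
    congr 1
    omega
  · have hempty : {g : Fin (d + 1) → ℕ | ∑ i, g i + d ≤ k} = ∅ :=
      Set.eq_empty_of_forall_notMem fun g (hg : ∑ i, g i + d ≤ k) => by omega
    rw [hempty, Set.ncard_empty, Nat.choose_eq_zero_of_lt (by omega)]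
theorem sum_smul_Vpt' (n : ℕ) (l : Fin (n + 1) → ℝ) :
    ∑ j, l j • Vpt' n j =
      Fin.snoc (Fin.snoc (fun j : Fin n => l j.castSucc - l (Fin.last n)) (∑ j, l j))
        (∑ j, l j) := by
  have hne (j : Fin n) : (j : ℕ) ≠ n ∧ (j : ℕ) ≠ n + 1 := by omega
  simp only [funext_iff, Fin.forall_fin_succ']
  refine ⟨⟨fun j => ?_, ?_⟩, ?_⟩ <;>
    simp [Fin.sum_univ_castSucc (n := n), Vpt', Fin.val_eq_val, sub_eq_add_neg, hne,
      (hne _).1.symm, (hne _).2.symm]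

def latticeMap (n : ℕ) (f : Fin (n + 2) → ℕ) : Fin (n + 2) → ℤ :=
  Fin.snoc (Fin.snoc (fun j : Fin n => (f j.castSucc.castSucc : ℤ) - f (Fin.last n).castSucc)
    (∑ i, (f i : ℤ))) (∑ i, (f i : ℤ))

section
variable {n : ℕ}

@[simp] theorem latticeMap_castSucc_castSucc (f : Fin (n + 2) → ℕ) (j : Fin n) :
    latticeMap n f j.castSucc.castSucc = f j.castSucc.castSucc - f (Fin.last n).castSucc := by
  simp [latticeMap]

@[simp] theorem latticeMap_castSucc_last (f : Fin (n + 2) → ℕ) :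
    latticeMap n f (Fin.last n).castSucc = ∑ i, (f i : ℤ) := by
  simp [latticeMap]

@[simp] theorem latticeMap_last (f : Fin (n + 2) → ℕ) :
    latticeMap n f (Fin.last (n + 1)) = ∑ i, (f i : ℤ) := by
  simp [latticeMap]

theorem exists_sum_smul_Vpt'_eq_latticeMap (f : Fin (n + 2) → ℕ) :
    ∃ l : Fin (n + 1) → ℝ, (∀ j, 0 ≤ l j) ∧ ∑ j, l j = ∑ i, f i ∧
      ∑ j, l j • Vpt' n j = fun i => (latticeMap n f i : ℝ) := by
  set t : ℝ := f (Fin.last (n + 1)) / (n + 1)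
  have hsum : ∑ j : Fin (n + 1), ((f j.castSucc : ℝ) + t) = ∑ i, f i := by
    push_cast
    rw [sum_add_distrib, Fin.sum_univ_castSucc (f := fun i => (f i : ℝ))]
    simp [t]
    field_simp
  refine ⟨fun j => f j.castSucc + t, fun j => by positivity, hsum, ?_⟩
  rw [sum_smul_Vpt', hsum]
  simp only [funext_iff, Fin.forall_fin_succ']
  simp

theorem exists_latticeMap_eq_of_shift {k c : ℕ} {x : Fin (n + 2) → ℤ}
    (hc : ∀ j : Fin n, 0 ≤ x j.castSucc.castSucc + c)
    (hsum : ∑ j : Fin n, (x j.castSucc.castSucc + c) + c ≤ x (Fin.last n).castSucc)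
    (hk : x (Fin.last n).castSucc ≤ k) (hx : x (Fin.last (n + 1)) = x (Fin.last n).castSucc) :
    ∃ f : Fin (n + 2) → ℕ, ∑ i, f i ≤ k ∧ latticeMap n f = x := by
  set r : ℤ := x (Fin.last n).castSucc - ∑ j : Fin n, (x j.castSucc.castSucc + c) - c
  set y : Fin (n + 2) → ℤ :=
    Fin.snoc (Fin.snoc (fun j : Fin n => x j.castSucc.castSucc + c) c) r
  have hy : ∀ i, 0 ≤ y i := by
    simp only [Fin.forall_fin_succ']
    refine ⟨⟨fun j => ?_, ?_⟩, ?_⟩ <;> simp only [y, Fin.snoc_castSucc, Fin.snoc_last]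
    · exact hc j
    · positivity
    · omega
  lift y to Fin (n + 2) → ℕ using hy with f hf
  have hf₀ (j : Fin n) : (f j.castSucc.castSucc : ℤ) = x j.castSucc.castSucc + c := by
    simpa [y] using congrFun hf j.castSucc.castSucc
  have hf₁ : (f (Fin.last n).castSucc : ℤ) = c := by
    simpa [y] using congrFun hf (Fin.last n).castSucc
  have hf₂ : (f (Fin.last (n + 1)) : ℤ) = r := by
    simpa [y] using congrFun hf (Fin.last (n + 1))
  have hfsum : ∑ i, (f i : ℤ) = x (Fin.last n).castSucc := by
    rw [Fin.sum_univ_castSucc, Fin.sum_univ_castSucc]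
    simp only [hf₀, hf₁, hf₂, r]
    ring
  refine ⟨f, ?_, ?_⟩
  · have : ((∑ i, f i : ℕ) : ℤ) ≤ k := by push_cast; rwa [hfsum]
    exact_mod_cast this
  · simp only [funext_iff, Fin.forall_fin_succ']
    simp [hf₀, hf₁, hfsum, hx]

theorem exists_latticeMap_eq {k : ℕ} {x : Fin (n + 2) → ℤ} {l : Fin (n + 1) → ℝ}
    (hl : ∀ j, 0 ≤ l j) (hlk : ∑ j, l j ≤ k)
    (hx : ∑ j, l j • Vpt' n j = fun i => (x i : ℝ)) :
    ∃ f : Fin (n + 2) → ℕ, ∑ i, f i ≤ k ∧ latticeMap n f = x := by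
  rw [sum_smul_Vpt'] at hx
  have hx₀ (j : Fin n) : (x j.castSucc.castSucc : ℝ) = l j.castSucc - l (Fin.last n) := by
    simpa using (congrFun hx j.castSucc.castSucc).symm
  have hx₁ : (x (Fin.last n).castSucc : ℝ) = ∑ j, l j := by
    simpa using (congrFun hx (Fin.last n).castSucc).symm
  have hx₂ : (x (Fin.last (n + 1)) : ℝ) = ∑ j, l j := by
    simpa using (congrFun hx (Fin.last (n + 1))).symm
  set c : ℕ := ⌊l (Fin.last n)⌋₊
  have hc₀ : (c : ℝ) ≤ l (Fin.last n) := Nat.floor_le (hl _)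
  have hc₁ : l (Fin.last n) < c + 1 := Nat.lt_floor_add_one _
  refine exists_latticeMap_eq_of_shift (c := c) (fun j => ?_) ?_ ?_ ?_
  · have : (-1 : ℝ) < x j.castSucc.castSucc + c := by linarith [hx₀ j, hl j.castSucc]
    have : (-1 : ℤ) < x j.castSucc.castSucc + c := by exact_mod_cast this
    omega
  · have : ∑ j : Fin n, ((x j.castSucc.castSucc : ℝ) + c) + c ≤ x (Fin.last n).castSucc := by
      simp only [hx₁, hx₀, Fin.sum_univ_castSucc (f := l), sum_add_distrib, sum_sub_distrib,
        sum_const, card_univ, Fintype.card_fin, nsmul_eq_mul]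
      nlinarith [(n.cast_nonneg : (0 : ℝ) ≤ n)]
    exact_mod_cast this
  · exact_mod_cast hx₁ ▸ hlk
  · exact_mod_cast hx₂.trans hx₁.symm
theorem latticeMap_injOn : Set.InjOn (latticeMap n) {f | ∃ i : Fin (n + 1), f i.castSucc = 0} := by
  rintro f ⟨i₀, hf⟩ g ⟨j₀, hg⟩ h
  set d : ℤ := g (Fin.last n).castSucc - f (Fin.last n).castSucc
  have hshift : ∀ i : Fin (n + 1), (g i.castSucc : ℤ) = f i.castSucc + d := by
    rw [Fin.forall_fin_succ']
    refine ⟨fun j => ?_, by simp [d]⟩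
    have := congrFun h j.castSucc.castSucc
    simp only [latticeMap_castSucc_castSucc] at this
    omega
  have hd : d = 0 := by
    have := hshift i₀
    have := hshift j₀
    simp only [hf, hg, Nat.cast_zero] at *
    omega
  have hlast : g (Fin.last (n + 1)) = f (Fin.last (n + 1)) := by
    have := congrFun h (Fin.last (n + 1))
    simp only [latticeMap_last, Fin.sum_univ_castSucc (n := n + 1), hshift, hd, add_zero] at this
    omega
  have hcast (i : Fin (n + 1)) : f i.castSucc = g i.castSucc := by
    have := hshift i
    omega
  rw [funext_iff, Fin.forall_fin_succ']
  exact ⟨hcast, hlast.symm⟩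

theorem exists_latticeMap_eq_of_castSucc_eq_zero (f : Fin (n + 2) → ℕ) :
    ∃ g : Fin (n + 2) → ℕ, (∃ i : Fin (n + 1), g i.castSucc = 0) ∧ ∑ i, g i = ∑ i, f i ∧
      latticeMap n g = latticeMap n f := by
  induction hm : f (Fin.last n).castSucc using Nat.strong_induction_on generalizing f with
  | _ m ih =>
  by_cases h₀ : ∃ i : Fin (n + 1), f i.castSucc = 0
  · exact ⟨f, h₀, rfl, rfl⟩
  push Not at h₀
  -- subtracting `(1, …, 1, -(n + 1))` changes neither the sum nor the image
  set g : Fin (n + 2) → ℕ :=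
    Fin.snoc (fun i : Fin (n + 1) => f i.castSucc - 1) (f (Fin.last (n + 1)) + (n + 1))
  have hg (i : Fin (n + 1)) : (g i.castSucc : ℤ) = f i.castSucc - 1 := by
    have := h₀ i
    simp only [g, Fin.snoc_castSucc]
    omega
  have hgsum : ∑ i, (g i : ℤ) = ∑ i, (f i : ℤ) := by
    rw [Fin.sum_univ_castSucc, Fin.sum_univ_castSucc (f := fun i => (f i : ℤ))]
    simp_rw [hg]
    simp [g, sum_sub_distrib]
  obtain ⟨g', hg'₀, hg'sum, hg'⟩ := ih _ (by have := hg (Fin.last n); omega) g rfl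
  refine ⟨g', hg'₀, hg'sum.trans (by exact_mod_cast hgsum), hg'.trans ?_⟩
  simp only [funext_iff, Fin.forall_fin_succ']
  simp [hg, hgsum]

theorem image_latticeMap_sum_le (k : ℕ) :
    latticeMap n '' {f | ∑ i, f i ≤ k} =
      latticeMap n '' ({f | ∑ i, f i ≤ k} ∩ {f | ∃ i : Fin (n + 1), f i.castSucc = 0}) := by
  refine (Set.image_mono Set.inter_subset_left).antisymm' ?_
  rintro _ ⟨f, hf, rfl⟩
  obtain ⟨g, hg₀, hgsum, hg⟩ := exists_latticeMap_eq_of_castSucc_eq_zero f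
  exact ⟨g, ⟨hgsum.trans_le hf, hg₀⟩, hg⟩

end

theorem latticePoints_eq_image (n k : ℕ) :
    {x : Fin (n + 2) → ℤ | (fun i => (x i : ℝ)) ∈
        (k : ℝ) • convexHull ℝ (insert (0 : Fin (n + 2) → ℝ) (Set.range (Vpt' n)))} =
      latticeMap n '' {f | ∑ i, f i ≤ k} := by
  ext x
  rw [Set.mem_ofPred_eq, mem_smul_convexHull_insert_zero_range_iff _ k.cast_nonneg]
  constructor
  · rintro ⟨l, hl, hlk, hx⟩
    exact exists_latticeMap_eq hl hlk hx
  · rintro ⟨f, hf, rfl⟩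
    obtain ⟨l, hl, hlf, hlx⟩ := exists_sum_smul_Vpt'_eq_latticeMap f
    exact ⟨l, hl, by rw [hlf]; exact_mod_cast hf, hlx⟩

theorem stmt19_general (n : ℕ) (k : ℕ) :
    Set.ncard {x : Fin (n + 2) → ℤ |
        (fun i => (x i : ℝ)) ∈
          (k : ℝ) • convexHull ℝ (insert (0 : Fin (n + 2) → ℝ) (Set.range (Vpt' n)))}
      = ∑ j ∈ Finset.range (min k n + 1), (k - j + n + 1).choose (n + 1) := by
  rw [latticePoints_eq_image, image_latticeMap_sum_le,
    (latticeMap_injOn.mono Set.inter_subset_right).ncard_image]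
  have hsplit := Set.ncard_inter_add_ncard_sdiff_eq_ncard {f : Fin (n + 2) → ℕ | ∑ i, f i ≤ k}
    {f | ∃ i : Fin (n + 1), f i.castSucc = 0} (finite_setOf_sum_le _ k)
  have hdiff : {f : Fin (n + 2) → ℕ | ∑ i, f i ≤ k} \ {f | ∃ i : Fin (n + 1), f i.castSucc = 0} =
      {f | ∑ i, f i ≤ k ∧ ∀ i : Fin (n + 1), f i.castSucc ≠ 0} := by
    ext f
    simp
  have hB : {f : Fin (n + 2) → ℕ | ∑ i, f i ≤ k ∧ ∀ i : Fin (n + 1), f i.castSucc ≠ 0}.ncard =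
      (k + 1).choose (n + 2) :=
    ncard_setOf_sum_le_of_castSucc_ne_zero (n + 1) k
  rw [hdiff, hB, ncard_setOf_sum_le, ← add_assoc] at hsplit
  have := Nat.sum_range_min_choose_add_choose n k
  omega

theorem stmt19 (n : ℕ) (hn : 1 ≤ n) (k : ℕ) :
    Set.ncard {x : Fin (n + 2) → ℤ |
        (fun i => (x i : ℝ)) ∈
          (k : ℝ) • convexHull ℝ (insert (0 : Fin (n + 2) → ℝ) (Set.range (Vpt' n)))}
      = ∑ j ∈ Finset.range (min k n + 1), (k - j + n + 1).choose (n + 1) :=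
  stmt19_general n k
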